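/- (Chaplygin sleigh on an inclined plane.) Consider the Chaplygin sleigh system on ℝ⁵ with potential U = mμ(x + a cos φ), μ > 0: m v̇₁ = m a ω² − mμ cos φ, (I+ma²) ω̇ = −m a ω v₁ + mμ a sin φ, ẋ = v₁ cos φ, ẏ = v₁ sin φ, φ̇ = ω, with energy E = ½(m v₁² + (I+ma²) ω²) + mμ(x + a cos φ). Then: (i) E is a first integral, ⟨v, ∇E⟩ = 0; (ii) u_x = ∂/∂x is a symmetry field, [v, u_x] = 0; (iii) ⟨u_x, ∇E⟩ = mμ everywhere; consequently the system is Hamiltonian with the rank-2 bracket J⁽²⁾ = v∧u_x: J⁽²⁾(p)·∇E(p) = mμ·v(p) for every p ∈ ℝ⁵. -/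

import Mathlib

/-- The Chaplygin sleigh on an inclined plane: the system on ℝ⁵, coordinates
`p = (v₁, ω, x, y, φ)`, parameters `m, I, a > 0` and slope parameter `μ > 0`, with potential
`U = mμ(x + a cos φ)`:
`m v̇₁ = m a ω² − mμ cos φ`, `(I+ma²) ω̇ = −m a ω v₁ + mμ a sin φ`,
`ẋ = v₁ cos φ`, `ẏ = v₁ sin φ`, `φ̇ = ω`. -/
noncomputable def sleighInc (m I a μ : ℝ) (p : Fin 5 → ℝ) : Fin 5 → ℝ :=
  ![a * (p 1) ^ 2 - μ * Real.cos (p 4),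
    (-(m * a * (p 1) * (p 0)) + m * μ * a * Real.sin (p 4)) / (I + m * a ^ 2),
    (p 0) * Real.cos (p 4),
    (p 0) * Real.sin (p 4),
    p 1]

/-- The energy of the Chaplygin sleigh on an inclined plane:
`E = ½(m v₁² + (I+ma²) ω²) + mμ(x + a cos φ)`. -/
noncomputable def sleighIncE (m I a μ : ℝ) (p : Fin 5 → ℝ) : ℝ :=
  (1 / 2) * (m * (p 0) ^ 2 + (I + m * a ^ 2) * (p 1) ^ 2)
    + m * μ * (p 2 + a * Real.cos (p 4))

/-- The wedge of two vector fields: `(v ∧ u)_ij = v_i u_j − v_j u_i`. -/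
noncomputable def wedge {n : ℕ} (v u : (Fin n → ℝ) → (Fin n → ℝ)) (x : Fin n → ℝ) :
    Matrix (Fin n) (Fin n) ℝ :=
  Matrix.of fun i j => v x i * u x j - v x j * u x i

/-- The gradient of a scalar function on ℝⁿ, as the vector of partial derivatives. -/
noncomputable def grad {n : ℕ} (F : (Fin n → ℝ) → ℝ) (x : Fin n → ℝ) : Fin n → ℝ :=
  fun j => fderiv ℝ F x (Pi.single j 1)

/-! For any wedge, `(v ∧ u) ∇E = ⟨u, ∇E⟩ v − ⟨v, ∇E⟩ u`, so the Hamiltonian form `J⁽²⁾∇E = mμ v`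
is (iii) combined with the conservation of energy (i). The symmetry (ii) holds because the
vector field does not depend on `x`: its derivative along the constant field `∂/∂x` vanishes. -/

open Matrix

theorem fderiv_apply_eq_zero_of_forall_add_smul_eq {E F : Type*} [NormedAddCommGroup E]
    [NormedSpace ℝ E] [NormedAddCommGroup F] [NormedSpace ℝ F] {f : E → F} {x w : E}
    (h : ∀ t : ℝ, f (x + t • w) = f x) : fderiv ℝ f x w = 0 := by
  by_cases hf : DifferentiableAt ℝ f x
  · rw [← hf.lineDeriv_eq_fderiv, lineDeriv, funext h, deriv_const]
  · rw [fderiv_zero_of_not_differentiableAt hf, _root_.zero_apply]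

theorem lieBracket_const_right_eq_zero_of_forall_add_smul_eq {E : Type*} [NormedAddCommGroup E]
    [NormedSpace ℝ E] {V : E → E} {w x : E} (h : ∀ t : ℝ, V (x + t • w) = V x) :
    VectorField.lieBracket ℝ V (fun _ => w) x = 0 := by
  rw [VectorField.lieBracket, fderiv_const_apply, _root_.zero_apply,
    fderiv_apply_eq_zero_of_forall_add_smul_eq h, sub_zero]

theorem dotProduct_grad {n : ℕ} (F : (Fin n → ℝ) → ℝ) (x w : Fin n → ℝ) :
    w ⬝ᵥ grad F x = fderiv ℝ F x w := by
  have hsingle (i : Fin n) : Pi.single i (w i) = w i • Pi.single i (1 : ℝ) := by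
    rw [← Pi.single_smul', smul_eq_mul, mul_one]
  conv_rhs => rw [← Finset.univ_sum_single w]
  simp [dotProduct, grad, hsingle]

theorem wedge_mulVec {n : ℕ} (v u : (Fin n → ℝ) → (Fin n → ℝ)) (x g : Fin n → ℝ) :
    wedge v u x *ᵥ g = (u x ⬝ᵥ g) • v x - (v x ⬝ᵥ g) • u x := by
  ext i
  simp only [mulVec, dotProduct, wedge, of_apply, sub_mul, Finset.sum_sub_distrib, Pi.sub_apply,
    Pi.smul_apply, smul_eq_mul, Finset.sum_mul]
  congr 1 <;> exact Finset.sum_congr rfl fun _ _ => by ring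

theorem wedge_mulVec_grad {n : ℕ} (v u : (Fin n → ℝ) → (Fin n → ℝ)) (F : (Fin n → ℝ) → ℝ)
    (x : Fin n → ℝ) :
    wedge v u x *ᵥ grad F x = fderiv ℝ F x (u x) • v x - fderiv ℝ F x (v x) • u x := by
  rw [wedge_mulVec, dotProduct_grad, dotProduct_grad]

theorem fderiv_sleighIncE_apply (m I a μ : ℝ) (p w : Fin 5 → ℝ) :
    fderiv ℝ (sleighIncE m I a μ) p w =
      m * p 0 * w 0 + (I + m * a ^ 2) * p 1 * w 1 + m * μ * (w 2 - a * Real.sin (p 4) * w 4) := by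
  have hx (i : Fin 5) := hasFDerivAt_apply (𝕜 := ℝ) i p
  have hcos := (Real.hasDerivAt_cos (p 4)).comp_hasFDerivAt p (hx 4)
  have hE : HasFDerivAt (sleighIncE m I a μ) _ p :=
    ((((hx 0).pow 2).const_mul m).add (((hx 1).pow 2).const_mul (I + m * a ^ 2))).const_mul
      (1 / 2 : ℝ) |>.add (((hx 2).add (hcos.const_mul a)).const_mul (m * μ))
  rw [hE.fderiv]
  simp only [one_div, Fin.isValue, Nat.add_one_sub_one, pow_one, nsmul_eq_mul, Nat.cast_ofNat,
    smul_add, neg_smul, smul_neg, _root_.add_apply, _root_.smul_apply,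
    ContinuousLinearMap.proj_apply, smul_eq_mul, _root_.neg_apply]
  ring

theorem sleighInc_add_smul_x (m I a μ t : ℝ) (p : Fin 5 → ℝ) :
    sleighInc m I a μ (p + t • ![0, 0, 1, 0, 0]) = sleighInc m I a μ p := by
  simp [sleighInc]

theorem fderiv_sleighIncE_sleighInc {m I a : ℝ} (μ : ℝ) (h : I + m * a ^ 2 ≠ 0) (p : Fin 5 → ℝ) :
    fderiv ℝ (sleighIncE m I a μ) p (sleighInc m I a μ p) = 0 := by
  rw [fderiv_sleighIncE_apply]
  simp only [Fin.isValue, sleighInc, cons_val_zero, cons_val_one, cons_val]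
  field_simp
  ring

theorem sleigh_inclined_hamiltonization_general
    (m I a μ : ℝ) (hm : 0 < m) (hI : 0 < I) :
    (∀ p : Fin 5 → ℝ, fderiv ℝ (sleighIncE m I a μ) p (sleighInc m I a μ p) = 0) ∧
    (∀ p : Fin 5 → ℝ,
      VectorField.lieBracket ℝ (sleighInc m I a μ) (fun _ => ![0, 0, 1, 0, 0]) p = 0) ∧
    (∀ p : Fin 5 → ℝ, fderiv ℝ (sleighIncE m I a μ) p ![0, 0, 1, 0, 0] = m * μ) ∧
    (∀ p : Fin 5 → ℝ,
      (wedge (sleighInc m I a μ) (fun _ => ![0, 0, 1, 0, 0]) p).mulVec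
          (grad (sleighIncE m I a μ) p)
        = (m * μ) • sleighInc m I a μ p) := by
  have first_integral := fderiv_sleighIncE_sleighInc μ (by positivity : I + m * a ^ 2 ≠ 0)
  have energy_slope (p : Fin 5 → ℝ) : fderiv ℝ (sleighIncE m I a μ) p ![0, 0, 1, 0, 0] = m * μ := by
    simp [fderiv_sleighIncE_apply]
  refine ⟨first_integral, fun p => ?_, energy_slope, fun p => ?_⟩
  · exact lieBracket_const_right_eq_zero_of_forall_add_smul_eq (sleighInc_add_smul_x m I a μ · p)
  · rw [wedge_mulVec_grad, first_integral, energy_slope, zero_smul, sub_zero]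

/-- **Chaplygin sleigh on an inclined plane.** For the sleigh with potential
`U = mμ(x + a cos φ)`: (i) the energy `E` is a first integral; (ii) `u_x = ∂/∂x` is a symmetry
field; (iii) `⟨u_x, ∇E⟩ = mμ` everywhere; consequently the system is Hamiltonian with the
rank-2 bracket `J⁽²⁾ = v ∧ u_x`: `J⁽²⁾(p)·∇E(p) = mμ·v(p)` for every `p ∈ ℝ⁵`. -/
theorem sleigh_inclined_hamiltonization
    (m I a μ : ℝ) (hm : 0 < m) (hI : 0 < I) (ha : 0 < a) (hμ : 0 < μ) :
    (∀ p : Fin 5 → ℝ, fderiv ℝ (sleighIncE m I a μ) p (sleighInc m I a μ p) = 0) ∧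
    (∀ p : Fin 5 → ℝ,
      VectorField.lieBracket ℝ (sleighInc m I a μ) (fun _ => ![0, 0, 1, 0, 0]) p = 0) ∧
    (∀ p : Fin 5 → ℝ, fderiv ℝ (sleighIncE m I a μ) p ![0, 0, 1, 0, 0] = m * μ) ∧
    (∀ p : Fin 5 → ℝ,
      (wedge (sleighInc m I a μ) (fun _ => ![0, 0, 1, 0, 0]) p).mulVec
          (grad (sleighIncE m I a μ) p)
        = (m * μ) • sleighInc m I a μ p) :=
  sleigh_inclined_hamiltonization_general m I a μ hm hI
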